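/- Let t and u be trees, r a bijection from dom(t) to dom(u) witnessing that u is a rotation of t, and p ∈ dom(t) a position with r(p) = ε (the root of u). Then for every q ∈ dom(t) and every child direction 0 ≤ d < #_t(q) with q.d ∈ dom(t), we have r(q.d) = r(q).(-1) if and only if q.d is a prefix of p. In other words, the only parent-child reversions induced by r occur exactly along the path from the root of t to p. -/

import Mathlib

/-!
Every edge `q — q.d` of `t` is sent by `r` to an edge of `u`, traversed either downwards
(`r (q.d) = r(q).n`) or upwards (`r (q.d) = r(q).(-1)`). Along the path from the root to `p`
the edges must go up, since `r p = ε` and a down-edge followed by an up-edge would make `r`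
revisit a position. Conversely, since `r` is injective, at most one neighbour of `q` is
mapped to the parent of `r q`: for `q` off the path to `p` this is, by induction on depth, the
parent of `q`; for `q` on the path it is the next node towards `p`.
-/

open scoped Classical

/-- Positions in a tree: finite sequences of natural numbers. -/
abbrev Pos := List ℕ

/-- A tree over an alphabet `A`: a finite partial function from positions to `A`
whose domain is prefix-closed and closed under taking smaller sibling indices. -/
structure PTree (A : Type) where
  f : Pos → Option A
  fin : {p : Pos | f p ≠ none}.Finite
  prefixClosed : ∀ (p : Pos) (i : ℕ), f (p ++ [i]) ≠ none → f p ≠ none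
  childClosed : ∀ (p : Pos) (i j : ℕ), j < i → f (p ++ [i]) ≠ none → f (p ++ [j]) ≠ none

namespace PTree

/-- Domain of a tree. -/
def dom {A : Type} (t : PTree A) : Set Pos := {p | t.f p ≠ none}

/-- The maximal direction `N` such that some position `p.N` is in the domain. -/
noncomputable def maxDir {A : Type} (t : PTree A) : ℕ :=
  sSup {i | ∃ p, p ++ [i] ∈ t.dom}

/-- The direction alphabet `D(t) = {-1, 0, …, N}`. -/
noncomputable def dirs {A : Type} (t : PTree A) : Set ℤ :=
  {e | e = -1 ∨ (0 ≤ e ∧ e ≤ (t.maxDir : ℤ))}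

/-- Moving from position `p` in direction `e`: `-1` is the parent direction
(`(p.i).(-1) = p`), a non-negative direction `e` leads to the child `p.e`. -/
def step (p : Pos) (e : ℤ) : Pos :=
  if e = -1 then p.dropLast else p ++ [e.toNat]

/-- `t ∼_r u`: `u` is a rotation of `t` via the bijection `r`. -/
noncomputable def IsRotation {A B : Type} (t : PTree A) (u : PTree B) (r : Pos → Pos) : Prop :=
  Set.BijOn r t.dom u.dom ∧
  ∀ p ∈ t.dom, ∀ d : ℕ, (p ++ [d]) ∈ t.dom →
    ∃ e ∈ u.dirs, r (p ++ [d]) = step (r p) e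

/-- A simple path in a tree: pairwise distinct positions, each obtained from the
previous one by moving in a direction from `D(t) ∪ {-1}`. -/
noncomputable def IsPath {A : Type} (t : PTree A) (ps : List Pos) : Prop :=
  ps.Nodup ∧ (∀ q ∈ ps, q ∈ t.dom) ∧
  ps.Chain' (fun a b => ∃ e ∈ t.dirs, b = step a e)

theorem mem_dom_of_prefix {A : Type} (t : PTree A) {q w : Pos} (h : q <+: w)
    (hw : w ∈ t.dom) : q ∈ t.dom := by
  obtain ⟨s, rfl⟩ := h
  induction s using List.reverseRecOn with
  | nil => simpa using hw
  | append_singleton s i ih =>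
    exact ih (t.prefixClosed (q ++ s) i (by simpa [List.append_assoc, dom] using hw))

@[simp]
theorem step_neg_one (p : Pos) : step p (-1) = p.dropLast := if_pos rfl

namespace IsRotation

variable {A B : Type} {t : PTree A} {u : PTree B} {r : Pos → Pos}

theorem eq_dropLast_or_eq_append (hrot : IsRotation t u r) {q : Pos} {d : ℕ}
    (hqd : q ++ [d] ∈ t.dom) :
    r (q ++ [d]) = (r q).dropLast ∨ ∃ n : ℕ, r (q ++ [d]) = r q ++ [n] := by
  obtain ⟨e, he, hstep⟩ := hrot.2 q (t.prefixClosed q d hqd) d hqd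
  rcases he with rfl | ⟨he, -⟩
  · exact .inl (by simpa using hstep)
  · exact .inr ⟨e.toNat, by rwa [step, if_neg (by omega)] at hstep⟩

theorem dropLast_ne_of_eq_append (hrot : IsRotation t u r) {q : Pos} {d e n : ℕ}
    (hqde : q ++ [d] ++ [e] ∈ t.dom) (hdown : r (q ++ [d]) = r q ++ [n]) :
    r (q ++ [d] ++ [e]) ≠ (r (q ++ [d])).dropLast := by
  intro hup
  rw [hdown, List.dropLast_concat] at hup
  have hq : q ∈ t.dom := mem_dom_of_prefix t ⟨[d, e], by simp⟩ hqde
  have := congrArg List.length (hrot.1.injOn hqde hq hup)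
  simp at this

variable {p : Pos} (hrot : IsRotation t u r) (hp : p ∈ t.dom) (hroot : r p = [])
include hrot hp hroot

theorem eq_dropLast_of_prefix {q : Pos} {d : ℕ} (hpre : q ++ [d] <+: p) :
    r (q ++ [d]) = (r q).dropLast := by
  obtain ⟨s, hs⟩ := hpre
  induction s generalizing q d with
  | nil =>
    rcases hrot.eq_dropLast_or_eq_append (mem_dom_of_prefix t ⟨[], hs⟩ hp) with hup | ⟨n, hdown⟩
    · exact hup
    · rw [List.append_nil] at hs
      simp [hs, hroot] at hdown
  | cons e s ih =>
    have hqd : q ++ [d] ∈ t.dom := mem_dom_of_prefix t ⟨e :: s, hs⟩ hp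
    have hqde : q ++ [d] ++ [e] ∈ t.dom := mem_dom_of_prefix t ⟨s, by simpa using hs⟩ hp
    rcases hrot.eq_dropLast_or_eq_append hqd with hup | ⟨n, hdown⟩
    · exact hup
    · exact absurd (ih (by simpa using hs)) (hrot.dropLast_ne_of_eq_append hqde hdown)

theorem prefix_of_eq_dropLast_of_prefix {q : Pos} {d : ℕ} (hq : q <+: p)
    (hqd : q ++ [d] ∈ t.dom) (hup : r (q ++ [d]) = (r q).dropLast) : q ++ [d] <+: p := by
  obtain ⟨s, hs⟩ := hq
  cases s with
  | nil =>
    rw [List.append_nil] at hs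
    subst hs
    have hsame : r (q ++ [d]) = r q := by rw [hup, hroot, List.dropLast_nil]
    have := congrArg List.length (hrot.1.injOn hqd hp hsame)
    simp at this
  | cons e s =>
    have hqe : q ++ [e] <+: p := ⟨s, by simpa using hs⟩
    have hqe_dom := mem_dom_of_prefix t hqe hp
    rw [← hrot.eq_dropLast_of_prefix hp hroot hqe] at hup
    rwa [hrot.1.injOn hqd hqe_dom hup]

theorem prefix_of_eq_dropLast {q : Pos} {d : ℕ} (hqd : q ++ [d] ∈ t.dom)
    (hup : r (q ++ [d]) = (r q).dropLast) : q ++ [d] <+: p := by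
  induction q using List.reverseRecOn generalizing d with
  | nil => exact hrot.prefix_of_eq_dropLast_of_prefix hp hroot List.nil_prefix hqd hup
  | append_singleton q e ih =>
    by_cases hqe : q ++ [e] <+: p
    · exact hrot.prefix_of_eq_dropLast_of_prefix hp hroot hqe hqd hup
    · have hqe_dom : q ++ [e] ∈ t.dom := t.prefixClosed _ d hqd
      rcases hrot.eq_dropLast_or_eq_append hqe_dom with hup' | ⟨n, hdown⟩
      · exact absurd (ih hqe_dom hup') hqe
      · exact absurd hup (hrot.dropLast_ne_of_eq_append hqd hdown)

end IsRotation

end PTree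

/-- If `t ∼_r u` and `r p = ε`, then for every `q ∈ dom t` and
child `q.d ∈ dom t`, the edge is reversed (`r (q.d) = r(q).(-1)`) iff `q.d`
is a prefix of `p`. -/
theorem rotation_reversion {A B : Type} (t : PTree A) (u : PTree B) (r : Pos → Pos)
    (hrot : PTree.IsRotation t u r) (p : Pos) (hp : p ∈ t.dom)
    (hroot : r p = ([] : Pos)) :
    ∀ q ∈ t.dom, ∀ d : ℕ, q ++ [d] ∈ t.dom →
      (r (q ++ [d]) = PTree.step (r q) (-1) ↔ (q ++ [d]) <+: p) := by
  intro q _ d hqd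
  rw [PTree.step_neg_one]
  exact ⟨hrot.prefix_of_eq_dropLast hp hroot hqd, hrot.eq_dropLast_of_prefix hp hroot⟩
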